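/- J̃ = lim_{τ→∞} (I + τL)^{-1}: the normalized matrix of maximum in-forests is the limit of the parametric forest matrices J(τ) as τ → ∞. -/

import Mathlib

/-!
The forest matrices obey the recursion `L Q_k = σ_{k+1} I - Q_{k+1}`, `Q_0 = I`. Entrywise it is a
weight-preserving involution: a forest together with an extra arc `(i, l)` is matched with the
forest obtained by exchanging `(i, l)` for the arc leaving `i`, unless that would close a cycle.
Telescoping gives `(I + τL) Σ_k τ^k Q_k = σ(τ) I`, so `(I + τL)⁻¹ = σ(τ)⁻¹ Σ_k τ^k Q_k` for
`τ ≥ 0`. Numerator and denominator have degree `m`, the size of a maximum in-forest, with leading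
coefficients `Q_m` and `σ_m > 0`; dividing both by `τ^m` gives the limit `σ_m⁻¹ Q_m`.
-/

open Matrix Finset Polynomial

/-- `A` is (the arc set of) an in-forest of the weighted digraph with arc-weight
matrix `W`: all arcs are loopless arcs of positive weight, every vertex has
outdegree at most one, and there are no directed cycles. -/
def IsInForest {n : ℕ} (W : Matrix (Fin n) (Fin n) ℝ)
    (A : Finset (Fin n × Fin n)) : Prop :=
  (∀ e ∈ A, e.1 ≠ e.2 ∧ 0 < W e.1 e.2) ∧
  (∀ i : Fin n, (A.filter (fun e => e.1 = i)).card ≤ 1) ∧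
  (∀ i : Fin n, ¬ Relation.TransGen (fun a b => (a, b) ∈ A) i i)

/-- The weight of a forest: the product of its arc weights. -/
def forestWeight {n : ℕ} (W : Matrix (Fin n) (Fin n) ℝ)
    (A : Finset (Fin n × Fin n)) : ℝ :=
  ∏ e ∈ A, W e.1 e.2

/-- `i` belongs to the tree of the forest `A` converging to (rooted at) `j`. -/
def InTreeRootedAt {n : ℕ} (A : Finset (Fin n × Fin n)) (i j : Fin n) : Prop :=
  Relation.ReflTransGen (fun a b => (a, b) ∈ A) i j ∧ ∀ e ∈ A, e.1 ≠ j

open scoped Classical in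
/-- `σ_k`: the total weight of in-forests with `k` arcs. -/
noncomputable def sigmaW {n : ℕ} (W : Matrix (Fin n) (Fin n) ℝ) (k : ℕ) : ℝ :=
  ∑ A ∈ Finset.univ.powerset.filter
      (fun A => IsInForest W A ∧ A.card = k), forestWeight W A

open scoped Classical in
/-- `Q_k`: the matrix of in-forests with `k` arcs; its `(i,j)` entry is the total
weight of in-forests with `k` arcs in which `i` belongs to a tree rooted at `j`. -/
noncomputable def forestMatrix {n : ℕ} (W : Matrix (Fin n) (Fin n) ℝ) (k : ℕ) :
    Matrix (Fin n) (Fin n) ℝ :=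
  Matrix.of fun i j =>
    ∑ A ∈ Finset.univ.powerset.filter
        (fun A => IsInForest W A ∧ A.card = k ∧ InTreeRootedAt A i j),
      forestWeight W A

open scoped Classical in
/-- `σ`: the total weight of all in-forests. -/
noncomputable def sigmaTot {n : ℕ} (W : Matrix (Fin n) (Fin n) ℝ) : ℝ :=
  ∑ A ∈ Finset.univ.powerset.filter (fun A => IsInForest W A), forestWeight W A

open scoped Classical in
/-- `Q`: the matrix of all in-forests. -/
noncomputable def forestMatrixTot {n : ℕ} (W : Matrix (Fin n) (Fin n) ℝ) :
    Matrix (Fin n) (Fin n) ℝ :=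
  Matrix.of fun i j =>
    ∑ A ∈ Finset.univ.powerset.filter
        (fun A => IsInForest W A ∧ InTreeRootedAt A i j), forestWeight W A

open scoped Classical in
/-- The number of arcs in a maximum in-forest (equal to `n - d` where `d` is the
in-forest dimension). -/
noncomputable def maxForestCard {n : ℕ} (W : Matrix (Fin n) (Fin n) ℝ) : ℕ :=
  (Finset.univ.powerset.filter (fun A => IsInForest W A)).sup Finset.card

/-- The in-forest dimension `d` of the digraph. -/
noncomputable def forestDim {n : ℕ} (W : Matrix (Fin n) (Fin n) ℝ) : ℕ :=
  n - maxForestCard W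

/-- The (row) Laplacian matrix of the weighted digraph with arc-weight matrix `W`. -/
def lap {n : ℕ} (W : Matrix (Fin n) (Fin n) ℝ) : Matrix (Fin n) (Fin n) ℝ :=
  Matrix.diagonal (fun i => ∑ j, W i j) - W

/-- `J̃`: the normalized matrix of maximum in-forests. -/
noncomputable def Jtilde {n : ℕ} (W : Matrix (Fin n) (Fin n) ℝ) :
    Matrix (Fin n) (Fin n) ℝ :=
  (sigmaW W (maxForestCard W))⁻¹ • forestMatrix W (maxForestCard W)

open Filter Topology

namespace ArcSet

variable {α : Type*} {A : Finset (α × α)}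

abbrev Reach (A : Finset (α × α)) : α → α → Prop :=
  Relation.ReflTransGen fun a b => (a, b) ∈ A

theorem reach_mono {B : Finset (α × α)} (h : A ⊆ B) {x y : α} (hr : Reach A x y) :
    Reach B x y :=
  Relation.ReflTransGen.mono (fun _ _ hab => h hab) x y hr

theorem eq_of_reach_of_forall_notMem {x y : α} (hx : ∀ q, (x, q) ∉ A) (hr : Reach A x y) :
    x = y :=
  ((Relation.reflTransGen_iff_eq hx).mp hr).symm

open scoped Classical in
noncomputable def outTarget (A : Finset (α × α)) (i : α) : α :=
  if h : ∃ t, (i, t) ∈ A then h.choose else i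

theorem outTarget_mem {i : α} (h : ∃ t, (i, t) ∈ A) : (i, outTarget A i) ∈ A := by
  rw [outTarget, dif_pos h]
  exact h.choose_spec

variable [DecidableEq α]

theorem reach_erase {i t x y : α} (hxi : ¬ Reach A x i) (hr : Reach A x y) :
    Reach (A.erase (i, t)) x y := by
  induction hr with
  | refl => exact .refl
  | @tail b c hxb hbc ih =>
    have hbi : b ≠ i := fun h => hxi (h ▸ hxb)
    exact ih.tail (mem_erase.mpr ⟨by simp [hbi], hbc⟩)

theorem reach_insert {i l x y : α} (hr : Reach (insert (i, l) A) x y) :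
    Reach A x y ∨ Reach A x i ∧ Reach A l y := by
  induction hr with
  | refl => exact .inl .refl
  | @tail b c _ hbc ih =>
    rcases mem_insert.mp hbc with h | h
    · obtain ⟨rfl, rfl⟩ := Prod.mk.inj h
      exact .inr ⟨ih.elim id And.left, .refl⟩
    · exact ih.imp (·.tail h) fun h' => ⟨h'.1, h'.2.tail h⟩

theorem outTarget_insert {i l : α} (hi : ∀ q, (i, q) ∉ A) :
    outTarget (insert (i, l) A) i = l := by
  rcases mem_insert.mp (outTarget_mem ⟨l, mem_insert_self (i, l) A⟩) with h | h
  · exact (Prod.mk.inj h).2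
  · exact absurd h (hi _)

end ArcSet

open ArcSet

namespace IsInForest

variable {n : ℕ} {W : Matrix (Fin n) (Fin n) ℝ} {A B : Finset (Fin n × Fin n)}

theorem empty : IsInForest W (∅ : Finset (Fin n × Fin n)) := by
  refine ⟨by simp, by simp, fun i h => ?_⟩
  obtain ⟨c, hc, -⟩ := Relation.TransGen.head'_iff.mp h
  exact notMem_empty _ hc

theorem mono (hA : IsInForest W A) (hBA : B ⊆ A) : IsInForest W B :=
  ⟨fun e he => hA.1 e (hBA he),
    fun i => (card_le_card (filter_subset_filter _ hBA)).trans (hA.2.1 i),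
    fun i h => hA.2.2 i (Relation.TransGen.mono (fun _ _ hab => hBA hab) i i h)⟩

theorem eq_of_mem (hA : IsInForest W A) {i a b : Fin n} (ha : (i, a) ∈ A) (hb : (i, b) ∈ A) :
    a = b :=
  congrArg Prod.snd <|
    card_le_one.mp (hA.2.1 i) (i, a) (by simp [ha]) (i, b) (by simp [hb])

theorem not_reach_of_mem (hA : IsInForest W A) {i p : Fin n} (hp : (i, p) ∈ A) :
    ¬ Reach A p i :=
  fun hr => hA.2.2 i (Relation.TransGen.head' hp hr)

theorem notMem_erase (hA : IsInForest W A) {i t : Fin n} (ht : (i, t) ∈ A) (q : Fin n) :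
    (i, q) ∉ A.erase (i, t) := fun hq => by
  obtain rfl := hA.eq_of_mem (mem_of_mem_erase hq) ht
  exact Finset.notMem_erase _ _ hq

theorem forestWeight_pos (hA : IsInForest W A) : 0 < forestWeight W A :=
  prod_pos fun e he => (hA.1 e he).2

theorem card_le_maxForestCard (hA : IsInForest W A) : A.card ≤ maxForestCard W := by
  classical
  exact le_sup (mem_filter.mpr ⟨mem_powerset.mpr (subset_univ _), hA⟩)

theorem insert_of_not_reach (hA : IsInForest W A) {i l : Fin n} (hi : ∀ q, (i, q) ∉ A)
    (hil : 0 < W i l) (hli : ¬ Reach A l i) : IsInForest W (insert (i, l) A) := by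
  refine ⟨fun e he => ?_, fun q => ?_, fun x hx => ?_⟩
  · rcases mem_insert.mp he with rfl | he
    · exact ⟨fun h : i = l => hli (h ▸ .refl), hil⟩
    · exact hA.1 e he
  · rw [filter_insert]
    by_cases hq : i = q
    · subst hq
      have : A.filter (fun e => e.1 = i) = ∅ :=
        filter_eq_empty_iff.mpr fun e he hei => hi e.2 (hei ▸ he)
      simp [this]
    · simpa [hq] using hA.2.1 q
  · obtain ⟨c, hxc, hcx⟩ := Relation.TransGen.head'_iff.mp hx
    rcases mem_insert.mp hxc with h | h
    · obtain ⟨rfl, rfl⟩ := Prod.mk.inj h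
      exact hli ((reach_insert hcx).elim id And.left)
    · rcases reach_insert hcx with h' | ⟨h', h''⟩
      · exact hA.not_reach_of_mem h h'
      · exact hli (h''.trans (.head h h'))

theorem insert_erase_of_not_reach (hA : IsInForest W A) {i t l : Fin n} (ht : (i, t) ∈ A)
    (hil : 0 < W i l) (hli : ¬ Reach A l i) :
    IsInForest W (insert (i, l) (A.erase (i, t))) :=
  (hA.mono (erase_subset _ _)).insert_of_not_reach (hA.notMem_erase ht) hil
    fun h => hli (reach_mono (erase_subset _ _) h)

theorem inTreeRootedAt_of_reach (hA : IsInForest W A) {x i j : Fin n}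
    (hx : InTreeRootedAt A x j) (hxi : Reach A x i) : InTreeRootedAt A i j := by
  refine ⟨?_, hx.2⟩
  obtain ⟨hxj, hj⟩ := hx
  induction hxj using Relation.ReflTransGen.head_induction_on with
  | refl =>
    rcases Relation.ReflTransGen.cases_head hxi with rfl | ⟨c, hc, -⟩
    · exact .refl
    · exact absurd rfl (hj _ hc)
  | @head a c hac hcj ih =>
    rcases Relation.ReflTransGen.cases_head hxi with rfl | ⟨c', hc', hc'i⟩
    · exact .head hac hcj
    · exact ih (hA.eq_of_mem hc' hac ▸ hc'i)

theorem inTreeRootedAt_erase (hA : IsInForest W A) {i j t : Fin n} (ht : (i, t) ∈ A)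
    (hij : InTreeRootedAt A i j) : InTreeRootedAt (A.erase (i, t)) t j := by
  have htj := hA.inTreeRootedAt_of_reach hij (.single ht)
  exact ⟨reach_erase (hA.not_reach_of_mem ht) htj.1,
    fun e he => hij.2 e (mem_of_mem_erase he)⟩

end IsInForest

section ForestSums

open scoped Classical

variable {n : ℕ} {W : Matrix (Fin n) (Fin n) ℝ}

theorem forestMatrix_apply_eq_sum (k : ℕ) (i j : Fin n) :
    forestMatrix W k i j = ∑ A : Finset (Fin n × Fin n),
      if IsInForest W A ∧ A.card = k ∧ InTreeRootedAt A i j then forestWeight W A else 0 := by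
  rw [forestMatrix, of_apply, powerset_univ, sum_filter]

theorem sigmaW_eq_sum (k : ℕ) :
    sigmaW W k = ∑ A : Finset (Fin n × Fin n),
      if IsInForest W A ∧ A.card = k then forestWeight W A else 0 := by
  rw [sigmaW, powerset_univ, sum_filter]

theorem forestMatrix_zero : forestMatrix W 0 = 1 := by
  ext i j
  rw [forestMatrix_apply_eq_sum,
    sum_eq_single ∅ (fun A _ hA => if_neg fun h => hA (card_eq_zero.mp h.2.1)) (by simp)]
  have hroot : InTreeRootedAt (∅ : Finset (Fin n × Fin n)) i j ↔ i = j :=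
    ⟨fun h => eq_of_reach_of_forall_notMem (by simp) h.1, by rintro rfl; exact ⟨.refl, by simp⟩⟩
  simp only [IsInForest.empty, card_empty, hroot, true_and, forestWeight, prod_empty, one_apply]

theorem sigmaW_zero : sigmaW W 0 = 1 := by
  rw [sigmaW_eq_sum,
    sum_eq_single ∅ (fun A _ hA => if_neg fun h => hA (card_eq_zero.mp h.2)) (by simp)]
  simp [IsInForest.empty, forestWeight]

theorem forestMatrix_eq_zero_of_lt {k : ℕ} (hk : maxForestCard W < k) : forestMatrix W k = 0 := by
  ext i j
  rw [forestMatrix_apply_eq_sum]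
  refine sum_eq_zero fun A _ => if_neg fun h => ?_
  have := h.1.card_le_maxForestCard
  omega

theorem sigmaW_eq_zero_of_lt {k : ℕ} (hk : maxForestCard W < k) : sigmaW W k = 0 := by
  rw [sigmaW_eq_sum]
  refine sum_eq_zero fun A _ => if_neg fun h => ?_
  have := h.1.card_le_maxForestCard
  omega

theorem sigmaW_nonneg (k : ℕ) : 0 ≤ sigmaW W k :=
  sum_nonneg fun _ hA => (mem_filter.mp hA).2.1.forestWeight_pos.le

theorem sigmaW_maxForestCard_pos : 0 < sigmaW W (maxForestCard W) := by
  obtain ⟨A, hA, hcard⟩ := exists_mem_eq_sup _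
    ⟨∅, mem_filter.mpr ⟨empty_mem_powerset _, IsInForest.empty (W := W)⟩⟩ card
  exact sum_pos (fun B hB => (mem_filter.mp hB).2.1.forestWeight_pos)
    ⟨A, mem_filter.mpr ⟨(mem_filter.mp hA).1, (mem_filter.mp hA).2, hcard.symm⟩⟩

end ForestSums

namespace ForestRecursion

open scoped Classical

variable {n : ℕ} {W : Matrix (Fin n) (Fin n) ℝ}

/- A configuration `(none, B)` stands for the forest `B`, and `(some l, A)` for the forest `A`
together with the extra arc `(i, l)`. Left configurations enumerate the terms of
`Q_{k+1}(i,j) + (Σ_l w_il) Q_k(i,j)`, right ones those of `δ_ij σ_{k+1} + Σ_l w_il Q_k(l,j)`. -/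
abbrev Config (n : ℕ) := Option (Fin n) × Finset (Fin n × Fin n)

noncomputable def exchange (i : Fin n) : Config n → Config n
  | (none, B) =>
      if ∃ q, (i, q) ∈ B then (some (outTarget B i), B.erase (i, outTarget B i)) else (none, B)
  | (some l, A) =>
      if Reach A l i then (some l, A)
      else if ∃ q, (i, q) ∈ A then
        (some (outTarget A i), insert (i, l) (A.erase (i, outTarget A i)))
      else (none, insert (i, l) A)

def IsLeftConfig (W : Matrix (Fin n) (Fin n) ℝ) (k : ℕ) (i j : Fin n) : Config n → Prop
  | (none, B) => IsInForest W B ∧ B.card = k + 1 ∧ InTreeRootedAt B i j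
  | (some l, A) => IsInForest W A ∧ A.card = k ∧ InTreeRootedAt A i j ∧ W i l ≠ 0

def IsRightConfig (W : Matrix (Fin n) (Fin n) ℝ) (k : ℕ) (i j : Fin n) : Config n → Prop
  | (none, B) => i = j ∧ IsInForest W B ∧ B.card = k + 1
  | (some l, A) => IsInForest W A ∧ A.card = k ∧ InTreeRootedAt A l j ∧ W i l ≠ 0

noncomputable def configWeight (W : Matrix (Fin n) (Fin n) ℝ) (i : Fin n) : Config n → ℝ
  | (none, B) => forestWeight W B
  | (some l, A) => W i l * forestWeight W A

theorem isRightConfig_exchange (hW : ∀ i j, 0 ≤ W i j) {k : ℕ} {i j : Fin n} {x : Config n}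
    (h : IsLeftConfig W k i j x) : IsRightConfig W k i j (exchange i x) := by
  rcases x with ⟨_ | l, A⟩
  · obtain ⟨hA, hcard, hij⟩ := h
    by_cases hex : ∃ q, (i, q) ∈ A
    · have ht := outTarget_mem hex
      rw [exchange, if_pos hex]
      refine ⟨hA.mono (erase_subset _ _), ?_, hA.inTreeRootedAt_erase ht hij, (hA.1 _ ht).2.ne'⟩
      rw [card_erase_of_mem ht, hcard, Nat.add_sub_cancel]
    · rw [exchange, if_neg hex]
      exact ⟨eq_of_reach_of_forall_notMem (not_exists.mp hex) hij.1, hA, hcard⟩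
  · obtain ⟨hA, hcard, hij, hl⟩ := h
    by_cases hr : Reach A l i
    · rw [exchange, if_pos hr]
      exact ⟨hA, hcard, ⟨hr.trans hij.1, hij.2⟩, hl⟩
    have hil : 0 < W i l := (hW i l).lt_of_ne' hl
    rw [exchange, if_neg hr]
    by_cases hex : ∃ q, (i, q) ∈ A
    · have ht := outTarget_mem hex
      have htj := hA.inTreeRootedAt_erase ht hij
      have hij' : i ≠ j := hij.2 _ ht
      rw [if_pos hex]
      refine ⟨hA.insert_erase_of_not_reach ht hil hr, ?_,
        ⟨reach_mono (subset_insert _ _) htj.1, (forall_mem_insert _ _ _).mpr ⟨hij', htj.2⟩⟩,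
        (hA.1 _ ht).2.ne'⟩
      rw [card_insert_of_notMem (hA.notMem_erase ht l), card_erase_add_one ht, hcard]
    · rw [if_neg hex]
      have hi := not_exists.mp hex
      exact ⟨eq_of_reach_of_forall_notMem hi hij.1, hA.insert_of_not_reach hi hil hr,
        by rw [card_insert_of_notMem (hi l), hcard]⟩

theorem isLeftConfig_exchange (hW : ∀ i j, 0 ≤ W i j) {k : ℕ} {i j : Fin n} {x : Config n}
    (h : IsRightConfig W k i j x) : IsLeftConfig W k i j (exchange i x) := by
  rcases x with ⟨_ | l, A⟩
  · obtain ⟨rfl, hA, hcard⟩ := h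
    by_cases hex : ∃ q, (i, q) ∈ A
    · have ht := outTarget_mem hex
      rw [exchange, if_pos hex]
      refine ⟨hA.mono (erase_subset _ _), ?_, ⟨.refl, ?_⟩, (hA.1 _ ht).2.ne'⟩
      · rw [card_erase_of_mem ht, hcard, Nat.add_sub_cancel]
      · rintro ⟨a, b⟩ he rfl
        exact hA.notMem_erase ht b he
    · rw [exchange, if_neg hex]
      refine ⟨hA, hcard, .refl, ?_⟩
      rintro ⟨a, b⟩ he rfl
      exact hex ⟨b, he⟩
  · obtain ⟨hA, hcard, hlj, hl⟩ := h
    by_cases hr : Reach A l i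
    · rw [exchange, if_pos hr]
      exact ⟨hA, hcard, hA.inTreeRootedAt_of_reach hlj hr, hl⟩
    have hil : 0 < W i l := (hW i l).lt_of_ne' hl
    rw [exchange, if_neg hr]
    by_cases hex : ∃ q, (i, q) ∈ A
    · have ht := outTarget_mem hex
      have hij : i ≠ j := hlj.2 _ ht
      rw [if_pos hex]
      refine ⟨hA.insert_erase_of_not_reach ht hil hr, ?_,
        ⟨.head (mem_insert_self _ _) (reach_mono (subset_insert _ _) (reach_erase hr hlj.1)),
          (forall_mem_insert _ _ _).mpr ⟨hij, fun e he => hlj.2 e (mem_of_mem_erase he)⟩⟩,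
        (hA.1 _ ht).2.ne'⟩
      rw [card_insert_of_notMem (hA.notMem_erase ht l), card_erase_add_one ht, hcard]
    · rw [if_neg hex]
      have hi := not_exists.mp hex
      refine ⟨hA.insert_of_not_reach hi hil hr, by rw [card_insert_of_notMem (hi l), hcard],
        .head (mem_insert_self _ _) (reach_mono (subset_insert _ _) hlj.1),
        (forall_mem_insert _ _ _).mpr ⟨?_, hlj.2⟩⟩
      rintro rfl
      exact hr hlj.1

theorem exchange_exchange {i : Fin n} {x : Config n} (hx : IsInForest W x.2) :
    exchange i (exchange i x) = x := by
  rcases x with ⟨_ | l, A⟩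
  · by_cases hex : ∃ q, (i, q) ∈ A
    · have ht := outTarget_mem hex
      have hr : ¬ Reach (A.erase (i, outTarget A i)) (outTarget A i) i :=
        fun h => hx.not_reach_of_mem ht (reach_mono (erase_subset _ _) h)
      have hex' : ¬ ∃ q, (i, q) ∈ A.erase (i, outTarget A i) :=
        fun ⟨q, hq⟩ => hx.notMem_erase ht q hq
      rw [exchange, if_pos hex, exchange, if_neg hr, if_neg hex', insert_erase ht]
    · rw [exchange, if_neg hex, exchange, if_neg hex]
  · by_cases hr : Reach A l i
    · rw [exchange, if_pos hr, exchange, if_pos hr]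
    rw [exchange, if_neg hr]
    by_cases hex : ∃ q, (i, q) ∈ A
    · have ht := outTarget_mem hex
      set t := outTarget A i
      have hr' : ¬ Reach (insert (i, l) (A.erase (i, t))) t i := fun h => by
        rcases reach_insert h with h | ⟨h, -⟩ <;>
          exact hx.not_reach_of_mem ht (reach_mono (erase_subset _ _) h)
      rw [if_pos hex, exchange, if_neg hr', if_pos ⟨l, mem_insert_self _ _⟩,
        outTarget_insert (hx.notMem_erase ht), erase_insert (hx.notMem_erase ht l),
        insert_erase ht]
    · have hi := not_exists.mp hex
      rw [if_neg hex, exchange, if_pos ⟨l, mem_insert_self _ _⟩, outTarget_insert hi,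
        erase_insert (hi l)]

theorem configWeight_exchange {i : Fin n} {x : Config n} (hx : IsInForest W x.2) :
    configWeight W i (exchange i x) = configWeight W i x := by
  rcases x with ⟨_ | l, A⟩
  · by_cases hex : ∃ q, (i, q) ∈ A
    · rw [exchange, if_pos hex]
      exact mul_prod_erase A (fun e => W e.1 e.2) (outTarget_mem hex)
    · rw [exchange, if_neg hex]
  · by_cases hr : Reach A l i
    · rw [exchange, if_pos hr]
    rw [exchange, if_neg hr]
    by_cases hex : ∃ q, (i, q) ∈ A
    · have ht := outTarget_mem hex
      rw [if_pos hex]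
      simp only [configWeight, forestWeight]
      rw [prod_insert (hx.notMem_erase ht l), mul_left_comm]
      exact congrArg _ (mul_prod_erase A (fun e => W e.1 e.2) ht)
    · rw [if_neg hex]
      simp only [configWeight, forestWeight]
      rw [prod_insert (not_exists.mp hex l)]

theorem sum_isLeftConfig (k : ℕ) (i j : Fin n) :
    ∑ x ∈ univ.filter (IsLeftConfig W k i j), configWeight W i x
      = forestMatrix W (k + 1) i j + (∑ l, W i l) * forestMatrix W k i j := by
  rw [sum_filter, Fintype.sum_prod_type, Fintype.sum_option, sum_mul]
  congr 1
  · rw [forestMatrix_apply_eq_sum]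
    exact sum_congr rfl fun A _ => if_congr Iff.rfl rfl rfl
  · refine sum_congr rfl fun l _ => ?_
    by_cases hl : W i l = 0
    · simp [IsLeftConfig, hl]
    · rw [forestMatrix_apply_eq_sum, mul_sum]
      refine sum_congr rfl fun A _ => ?_
      rw [mul_ite, mul_zero]
      exact if_congr (by simp [IsLeftConfig, hl]) rfl rfl

theorem sum_isRightConfig (k : ℕ) (i j : Fin n) :
    ∑ x ∈ univ.filter (IsRightConfig W k i j), configWeight W i x
      = (if i = j then sigmaW W (k + 1) else 0) + ∑ l, W i l * forestMatrix W k l j := by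
  rw [sum_filter, Fintype.sum_prod_type, Fintype.sum_option]
  congr 1
  · by_cases hij : i = j
    · rw [if_pos hij, sigmaW_eq_sum]
      exact sum_congr rfl fun A _ => by simp [IsRightConfig, configWeight, hij]
    · rw [if_neg hij]
      exact sum_eq_zero fun A _ => by simp [IsRightConfig, hij]
  · refine sum_congr rfl fun l _ => ?_
    by_cases hl : W i l = 0
    · simp [IsRightConfig, hl]
    · rw [forestMatrix_apply_eq_sum, mul_sum]
      refine sum_congr rfl fun A _ => ?_
      rw [mul_ite, mul_zero]
      exact if_congr (by simp [IsRightConfig, hl]) rfl rfl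

theorem sum_isLeftConfig_eq_sum_isRightConfig (hW : ∀ i j, 0 ≤ W i j) (k : ℕ) (i j : Fin n) :
    ∑ x ∈ univ.filter (IsLeftConfig W k i j), configWeight W i x
      = ∑ x ∈ univ.filter (IsRightConfig W k i j), configWeight W i x := by
  have forest_of_left {x : Config n} (hx : x ∈ univ.filter (IsLeftConfig W k i j)) :
      IsInForest W x.2 := by
    rcases x with ⟨_ | _, _⟩ <;> exact (mem_filter.mp hx).2.1
  have forest_of_right {x : Config n} (hx : x ∈ univ.filter (IsRightConfig W k i j)) :
      IsInForest W x.2 := by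
    rcases x with ⟨_ | _, _⟩
    exacts [(mem_filter.mp hx).2.2.1, (mem_filter.mp hx).2.1]
  exact sum_bij' (fun x _ => exchange i x) (fun x _ => exchange i x)
    (fun x hx => mem_filter.mpr ⟨mem_univ _, isRightConfig_exchange hW (mem_filter.mp hx).2⟩)
    (fun x hx => mem_filter.mpr ⟨mem_univ _, isLeftConfig_exchange hW (mem_filter.mp hx).2⟩)
    (fun x hx => exchange_exchange (forest_of_left hx))
    (fun x hx => exchange_exchange (forest_of_right hx))
    (fun x hx => (configWeight_exchange (forest_of_left hx)).symm)

end ForestRecursion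

theorem lap_mul_forestMatrix {n : ℕ} {W : Matrix (Fin n) (Fin n) ℝ} (hW : ∀ i j, 0 ≤ W i j)
    (k : ℕ) : lap W * forestMatrix W k = sigmaW W (k + 1) • 1 - forestMatrix W (k + 1) := by
  ext i j
  have h := ForestRecursion.sum_isLeftConfig_eq_sum_isRightConfig hW k i j
  rw [ForestRecursion.sum_isLeftConfig, ForestRecursion.sum_isRightConfig] at h
  rw [lap, sub_mul, Matrix.sub_apply, diagonal_mul, mul_apply, Matrix.sub_apply, Matrix.smul_apply,
    one_apply]
  split_ifs at h ⊢ <;> simp only [smul_eq_mul, mul_one, mul_zero] <;> linarith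

section Resolvent

variable {n : ℕ} {W : Matrix (Fin n) (Fin n) ℝ}

theorem one_add_smul_lap_mul_sum_forestMatrix (hW : ∀ i j, 0 ≤ W i j) (τ : ℝ) :
    (1 + τ • lap W) * ∑ k ∈ range (maxForestCard W + 1), τ ^ k • forestMatrix W k
      = (∑ k ∈ range (maxForestCard W + 1), τ ^ k * sigmaW W k) • 1 := by
  set f : ℕ → Matrix (Fin n) (Fin n) ℝ := fun k => τ ^ k • (forestMatrix W k - sigmaW W k • 1)
  have hstep (k : ℕ) : (1 + τ • lap W) * (τ ^ k • forestMatrix W k)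
      = (τ ^ k * sigmaW W k) • 1 + (f k - f (k + 1)) := by
    rw [add_mul, one_mul, Matrix.smul_mul, Matrix.mul_smul, lap_mul_forestMatrix hW]
    simp only [f, pow_succ]
    module
  have hf_last : f (maxForestCard W + 1) = 0 := by
    simp [f, forestMatrix_eq_zero_of_lt, sigmaW_eq_zero_of_lt]
  rw [mul_sum, sum_congr rfl fun k _ => hstep k, sum_add_distrib, sum_range_sub', hf_last,
    ← sum_smul]
  simp [f, forestMatrix_zero, sigmaW_zero]

theorem inv_one_add_smul_lap (hW : ∀ i j, 0 ≤ W i j) {τ : ℝ} (hτ : 0 ≤ τ) :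
    (1 + τ • lap W)⁻¹ = (∑ k ∈ range (maxForestCard W + 1), τ ^ k * sigmaW W k)⁻¹ •
      ∑ k ∈ range (maxForestCard W + 1), τ ^ k • forestMatrix W k := by
  have hσ : 0 < ∑ k ∈ range (maxForestCard W + 1), τ ^ k * sigmaW W k :=
    sum_pos' (fun k _ => mul_nonneg (pow_nonneg hτ k) (sigmaW_nonneg k))
      ⟨0, by simp, by simp [sigmaW_zero]⟩
  refine inv_eq_right_inv ?_
  rw [Matrix.mul_smul, one_add_smul_lap_mul_sum_forestMatrix hW, smul_smul, inv_mul_cancel₀ hσ.ne',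
    one_smul]

end Resolvent

theorem tendsto_inv_pow_smul_sum_range_pow_smul {E : Type*} [AddCommMonoid E] [Module ℝ E]
    [TopologicalSpace E] [ContinuousAdd E] [ContinuousSMul ℝ E] (m : ℕ) (a : ℕ → E) :
    Tendsto (fun τ : ℝ => (τ ^ m)⁻¹ • ∑ k ∈ range (m + 1), τ ^ k • a k) atTop (𝓝 (a m)) := by
  have hcoeff (k : ℕ) (hk : k ∈ range (m + 1)) :
      Tendsto (fun τ : ℝ => τ ^ k / τ ^ m) atTop (𝓝 (if k = m then 1 else 0)) := by
    split_ifs with h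
    · subst h
      exact tendsto_const_nhds.congr' <|
        (eventually_gt_atTop 0).mono fun τ hτ => (div_self (pow_pos hτ k).ne').symm
    · exact tendsto_pow_div_pow_atTop_zero ((Nat.lt_succ_iff.mp (mem_range.mp hk)).lt_of_ne h)
  have h := tendsto_finsetSum _ fun k hk => (hcoeff k hk).smul_const (a k)
  simp only [ite_smul, one_smul, zero_smul, sum_ite_eq', mem_range, Nat.lt_succ_self,
    if_true] at h
  refine h.congr fun τ => ?_
  rw [smul_sum]
  exact sum_congr rfl fun k _ => by rw [smul_smul, div_eq_inv_mul]

theorem Jtilde_eq_limit_general {n : ℕ} (W : Matrix (Fin n) (Fin n) ℝ)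
    (hW : ∀ i j, 0 ≤ W i j) :
    Filter.Tendsto (fun τ : ℝ => (1 + τ • lap W)⁻¹) Filter.atTop
      (nhds (Jtilde W)) := by
  have hσ := tendsto_inv_pow_smul_sum_range_pow_smul (maxForestCard W) (sigmaW W)
  have hQ := tendsto_inv_pow_smul_sum_range_pow_smul (maxForestCard W) (forestMatrix W)
  refine ((hσ.inv₀ sigmaW_maxForestCard_pos.ne').smul hQ).congr' ?_
  filter_upwards [eventually_gt_atTop 0] with τ hτ
  rw [inv_one_add_smul_lap hW hτ.le, smul_smul]
  congr 1
  simp only [smul_eq_mul]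
  field_simp

/-- `J̃ = lim_{τ→∞} (I + τL)⁻¹`. -/
theorem Jtilde_eq_limit {n : ℕ} (W : Matrix (Fin n) (Fin n) ℝ)
    (hn : 1 < n) (hW : ∀ i j, 0 ≤ W i j) (hdiag : ∀ i, W i i = 0) :
    Filter.Tendsto (fun τ : ℝ => (1 + τ • lap W)⁻¹) Filter.atTop
      (nhds (Jtilde W)) :=
  Jtilde_eq_limit_general W hW
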